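/- arXiv:1206.1566 — 2 statements merged into one kernel-verified Lean document; each statement's English description precedes it below -/
import Mathlib

section
/- Let U1, U2, U3, U4 ∈ (Fin n → ZMod 2) be pairwise distinct and let α1, α2, α3, α4 ∈ ℝ be all nonzero. If A := α1 • S U1 + α2 • S U2 + α3 • S U3 + α4 • S U4 satisfies A² = 1, then α1² + α2² + α3² + α4² = 1 and U1 + U2 = U3 + U4, U1 + U3 = U2 + U4, and U1 + U4 = U2 + U3. -/
/-!
Since `S` is multiplicative and `U + U = 0`, expanding `A²` gives `(∑ αᵢ²) • 1` plus the cross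
terms `2 αᵢ αⱼ • S (Uᵢ + Uⱼ)`. The pair sums are nonzero, and `U1 + U2` differs from every other
pair sum except possibly `U3 + U4`. By linear independence the total coefficient of each group
element in `A² - 1` vanishes: at `U1 + U2` this forces `U1 + U2 = U3 + U4` (otherwise
`2 α1 α2 = 0`), which in an elementary abelian `2`-group is equivalent to the other two
equalities; at `0` it gives `∑ αᵢ² = 1`.
-/

open Finset

theorem LinearIndependent.sum_fiber_eq_zero {ι κ R M : Type*} [Fintype ι] [DecidableEq κ]
    [Semiring R] [AddCommMonoid M] [Module R M] {v : κ → M} (hv : LinearIndependent R v)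
    {V : ι → κ} {c : ι → R} (h : ∑ i, c i • v (V i) = 0) (g : κ) :
    ∑ i with V i = g, c i = 0 := by
  have hc : ∑ i, Finsupp.single (V i) (c i) = 0 := hv (by simpa [map_sum] using h)
  simpa [Finset.sum_filter, Finsupp.finsetSum_apply, Finsupp.single_apply] using
    DFunLike.congr_fun hc g

namespace ZModModule

variable {G : Type*} [AddCommGroup G] [Module (ZMod 2) G]

theorem add_eq_zero_iff_eq {a b : G} : a + b = 0 ↔ a = b := by
  rw [← sub_eq_add, sub_eq_zero]

theorem add_eq_add_iff_add_eq_add {a b c d : G} : a + b = c + d ↔ a + c = b + d := by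
  rw [← sub_eq_zero, sub_eq_add, ← sub_eq_zero (a := a + c), sub_eq_add, add_add_add_comm]

end ZModModule

section FourTermSquare

variable {G R M : Type*} [AddCommGroup G] [Module (ZMod 2) G] [CommRing R] [Ring M] [Algebra R M]

def pairSums (U1 U2 U3 U4 : G) : Fin 7 → G :=
  ![0, U1 + U2, U1 + U3, U1 + U4, U2 + U3, U2 + U4, U3 + U4]

def squareCoeffs (α1 α2 α3 α4 : R) : Fin 7 → R :=
  ![α1 ^ 2 + α2 ^ 2 + α3 ^ 2 + α4 ^ 2 - 1, 2 * α1 * α2, 2 * α1 * α3, 2 * α1 * α4,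
    2 * α2 * α3, 2 * α2 * α4, 2 * α3 * α4]

theorem sq_sub_one_eq_sum_pairSums {S : G → M} (hS0 : S 0 = 1)
    (hSmul : ∀ U V, S (U + V) = S U * S V) (U1 U2 U3 U4 : G) (α1 α2 α3 α4 : R) :
    (α1 • S U1 + α2 • S U2 + α3 • S U3 + α4 • S U4) ^ 2 - 1 =
      ∑ i, squareCoeffs α1 α2 α3 α4 i • S (pairSums U1 U2 U3 U4 i) := by
  simp only [Fin.sum_univ_seven, squareCoeffs, pairSums, Matrix.cons_val, sq, add_mul, mul_add,
    smul_mul_smul_comm, ← hSmul, ZModModule.add_self, hS0, add_comm U2 U1, add_comm U3 U1,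
    add_comm U4 U1, add_comm U3 U2, add_comm U4 U2, add_comm U4 U3]
  module

end FourTermSquare

theorem stmt_4_general {n : ℕ} {M : Type*} [Ring M] [Algebra ℝ M]
    (S : (Fin n → ZMod 2) → M)
    (hS0 : S 0 = 1)
    (hSmul : ∀ U V : Fin n → ZMod 2, S (U + V) = S U * S V)
    (hind : LinearIndependent ℝ S)
    (U1 U2 U3 U4 : Fin n → ZMod 2)
    (h12 : U1 ≠ U2) (h13 : U1 ≠ U3) (h14 : U1 ≠ U4)
    (h23 : U2 ≠ U3) (h24 : U2 ≠ U4) (h34 : U3 ≠ U4)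
    (α1 α2 α3 α4 : ℝ)
    (hα1 : α1 ≠ 0) (hα2 : α2 ≠ 0)
    (A : M) (hA : A = α1 • S U1 + α2 • S U2 + α3 • S U3 + α4 • S U4)
    (hA2 : A ^ 2 = 1) :
    α1 ^ 2 + α2 ^ 2 + α3 ^ 2 + α4 ^ 2 = 1 ∧
      U1 + U2 = U3 + U4 ∧ U1 + U3 = U2 + U4 ∧ U1 + U4 = U2 + U3 := by
  have hsum : ∑ i, squareCoeffs α1 α2 α3 α4 i • S (pairSums U1 U2 U3 U4 i) = 0 := by
    rw [← sq_sub_one_eq_sum_pairSums hS0 hSmul, ← hA, hA2, sub_self]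
  have hcoeff := hind.sum_fiber_eq_zero hsum
  have hP : U1 + U2 = U3 + U4 := by
    by_contra hP
    have e0 : 0 ≠ U1 + U2 := fun h => h12 (ZModModule.add_eq_zero_iff_eq.mp h.symm)
    have e23 : U2 + U3 ≠ U1 + U2 := by rw [add_comm U1]; simpa using h13.symm
    have e24 : U2 + U4 ≠ U1 + U2 := by rw [add_comm U1]; simpa using h14.symm
    have h := hcoeff (U1 + U2)
    rw [Finset.sum_filter, Fin.sum_univ_seven] at h
    simp [pairSums, squareCoeffs, e0, e23, e24, h23.symm, h24.symm, Ne.symm hP, hα1, hα2] at h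
  refine ⟨?_, hP, ZModModule.add_eq_add_iff_add_eq_add.mp hP,
    ZModModule.add_eq_add_iff_add_eq_add.mp (hP.trans (add_comm U3 U4))⟩
  have h := hcoeff 0
  rw [Finset.sum_filter, Fin.sum_univ_seven] at h
  simpa [pairSums, squareCoeffs, ZModModule.add_eq_zero_iff_eq, h12, h13, h14, h23, h24, h34,
    sub_eq_zero] using h

theorem stmt_4 {n : ℕ} (hn : 1 ≤ n) {M : Type*} [Ring M] [Algebra ℝ M]
    (S : (Fin n → ZMod 2) → M)
    (hS0 : S 0 = 1)
    (hSmul : ∀ U V : Fin n → ZMod 2, S (U + V) = S U * S V)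
    (hind : LinearIndependent ℝ S)
    (U1 U2 U3 U4 : Fin n → ZMod 2)
    (h12 : U1 ≠ U2) (h13 : U1 ≠ U3) (h14 : U1 ≠ U4)
    (h23 : U2 ≠ U3) (h24 : U2 ≠ U4) (h34 : U3 ≠ U4)
    (α1 α2 α3 α4 : ℝ)
    (hα1 : α1 ≠ 0) (hα2 : α2 ≠ 0) (hα3 : α3 ≠ 0) (hα4 : α4 ≠ 0)
    (A : M) (hA : A = α1 • S U1 + α2 • S U2 + α3 • S U3 + α4 • S U4)
    (hA2 : A ^ 2 = 1) :
    α1 ^ 2 + α2 ^ 2 + α3 ^ 2 + α4 ^ 2 = 1 ∧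
      U1 + U2 = U3 + U4 ∧ U1 + U3 = U2 + U4 ∧ U1 + U4 = U2 + U3 :=
  stmt_4_general S hS0 hSmul hind U1 U2 U3 U4 h12 h13 h14 h23 h24 h34 α1 α2 α3 α4 hα1 hα2 A hA hA2
end

section
/- Assume ψ ≠ 0, each W i is invertible, and there is an index i0 with C i0 = 0 and W i0 = 1. Fix V, V1, V2 ∈ (Fin n → ZMod 2) with V1 ≠ V2, V1 ≠ 0, V2 ≠ 0, and set A := S V * T V1 V2. Then the following are equivalent: (i) A can be used as a decoding observable, i.e., for every e : Fin m there exists ε ∈ {1, −1} ⊆ ℝ such that A (E e (W i ψ)) = ε • (E e (W i ψ)) for all i : Fin K; (ii) for every e : Fin m and every i : Fin K, ⟨C i, V + F e⟩ = p i (i.e., V + F e solves the linear system ⟨C i, ·⟩ = p i). -/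
/-!
Every vector `E e (W i ψ)` is a joint eigenvector of the stabilizers: `S V'` acts on it by
`(-1)^⟨u e + C i, V'⟩`, since `W i` and `E e` commute with every `S V'` up to those signs and `ψ` is
fixed. On such a vector `T V1 V2` acts by `(-1)^(a ∨ b)` with `a = ⟨u e + C i, V1⟩`,
`b = ⟨u e + C i, V2⟩`, so `A` acts by `(-1)^σ(u e + C i)` with `σ = syndromeExponent V V1 V2`.
The vectors are nonzero, hence `A` is a decoding observable iff `σ(u e + C i)` does not depend on
`i`. Comparing with the trivial codeword `C i0 = 0`, the difference `σ(u e + C i) - σ(u e)` is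
exactly `⟨C i, V + F e⟩ - p i`.
-/

def zmodTwoSign (x : ZMod 2) : ℝ := if x = 0 then 1 else -1

@[simp] theorem zmodTwoSign_zero : zmodTwoSign 0 = 1 := if_pos rfl

@[simp] theorem zmodTwoSign_one : zmodTwoSign 1 = -1 := if_neg one_ne_zero

theorem ZMod.two_cases : ∀ a : ZMod 2, a = 0 ∨ a = 1 := by
  decide

theorem zmodTwoSign_add (a b : ZMod 2) :
    zmodTwoSign (a + b) = zmodTwoSign a * zmodTwoSign b := by
  rcases a.two_cases with rfl | rfl <;> rcases b.two_cases with rfl | rfl <;>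
    simp [CharTwo.add_self_eq_zero]

theorem zmodTwoSign_mul_self (a : ZMod 2) : zmodTwoSign a * zmodTwoSign a = 1 := by
  rw [← zmodTwoSign_add, CharTwo.add_self_eq_zero, zmodTwoSign_zero]

theorem zmodTwoSign_injective : Function.Injective zmodTwoSign := by
  intro a b h
  rcases a.two_cases with rfl | rfl <;> rcases b.two_cases with rfl | rfl <;>
    first | rfl | norm_num at h

theorem zmodTwoSign_eq_one_or_eq_neg_one (a : ZMod 2) :
    zmodTwoSign a = 1 ∨ zmodTwoSign a = -1 := by
  rcases a.two_cases with rfl | rfl <;> simp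

/-- In `ZMod 2`, `a + b + a * b` is the Boolean `a ∨ b`. -/
theorem zmodTwoSign_add_add_mul (a b : ZMod 2) :
    zmodTwoSign (a + b + a * b) =
      (1 / 2) * (-1 + zmodTwoSign a + zmodTwoSign b + zmodTwoSign (a + b)) := by
  rcases a.two_cases with rfl | rfl <;> rcases b.two_cases with rfl | rfl <;>
    simp only [zero_add, add_zero, mul_zero, mul_one, CharTwo.add_self_eq_zero] <;> norm_num

section JointEigenvector

variable {H : Type*} [AddCommGroup H] [Module ℂ H] {n : ℕ}
  (S : (Fin n → ZMod 2) → Module.End ℂ H)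

def IsJointEigenvector (w : Fin n → ZMod 2) (x : H) : Prop :=
  ∀ V, S V x = zmodTwoSign (w ⬝ᵥ V) • x

variable {S}

theorem isJointEigenvector_zero_of_forall_apply_eq {ψ : H} (hψ : ∀ V, S V ψ = ψ) :
    IsJointEigenvector S 0 ψ := fun V => by
  rw [zero_dotProduct, zmodTwoSign_zero, one_smul, hψ]

theorem IsJointEigenvector.apply {w c : Fin n → ZMod 2} {x : H} (hx : IsJointEigenvector S w x)
    {L : Module.End ℂ H} (hL : ∀ V, L * S V = zmodTwoSign (c ⬝ᵥ V) • (S V * L)) :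
    IsJointEigenvector S (c + w) (L x) := fun V => by
  have hLx : L (S V x) = zmodTwoSign (c ⬝ᵥ V) • S V (L x) := LinearMap.congr_fun (hL V) x
  rw [hx V, LinearMap.map_smul_of_tower] at hLx
  calc S V (L x)
      = zmodTwoSign (c ⬝ᵥ V) • zmodTwoSign (c ⬝ᵥ V) • S V (L x) := by
        rw [smul_smul, zmodTwoSign_mul_self, one_smul]
    _ = zmodTwoSign ((c + w) ⬝ᵥ V) • L x := by
        rw [← hLx, smul_smul, add_dotProduct, zmodTwoSign_add]

def syndromeExponent (V V1 V2 w : Fin n → ZMod 2) : ZMod 2 :=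
  w ⬝ᵥ V + (w ⬝ᵥ V1 + w ⬝ᵥ V2 + w ⬝ᵥ V1 * w ⬝ᵥ V2)

theorem IsJointEigenvector.syndrome_apply {w : Fin n → ZMod 2} {x : H}
    (hx : IsJointEigenvector S w x) (V V1 V2 : Fin n → ZMod 2) :
    (S V * ((1 / 2 : ℝ) • (-1 + S V1 + S V2 + S (V1 + V2)))) x =
      zmodTwoSign (syndromeExponent V V1 V2 w) • x := by
  simp only [Module.End.mul_apply, LinearMap.smul_apply, LinearMap.add_apply,
    LinearMap.neg_apply, Module.End.one_apply, hx V1, hx V2, hx (V1 + V2), dotProduct_add]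
  rw [← neg_one_smul ℝ x, ← add_smul, ← add_smul, ← add_smul, smul_smul,
    ← zmodTwoSign_add_add_mul, LinearMap.map_smul_of_tower, hx V, smul_smul, ← zmodTwoSign_add,
    syndromeExponent, add_comm]

end JointEigenvector

theorem syndromeExponent_add {n : ℕ} (V V1 V2 u c : Fin n → ZMod 2) :
    syndromeExponent V V1 V2 (u + c) =
      syndromeExponent V V1 V2 u + (c ⬝ᵥ (V + ((u ⬝ᵥ V2) • V1 + (u ⬝ᵥ V1) • V2)) +
        if c ⬝ᵥ V1 = 0 ∧ c ⬝ᵥ V2 = 0 then 0 else 1) := by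
  simp only [syndromeExponent, add_dotProduct, dotProduct_add, dotProduct_smul, smul_eq_mul]
  generalize u ⬝ᵥ V = a, c ⬝ᵥ V = b, u ⬝ᵥ V1 = x, u ⬝ᵥ V2 = y, c ⬝ᵥ V1 = c1, c ⬝ᵥ V2 = c2
  revert a b x y c1 c2
  decide

theorem exists_sign_forall_apply_eq_smul_iff {ι M : Type*} [AddCommGroup M] [Module ℝ M]
    {f : M → M} {x : ι → M} {a : ι → ZMod 2} (hx : ∀ i, x i ≠ 0)
    (hf : ∀ i, f (x i) = zmodTwoSign (a i) • x i) (i0 : ι) :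
    (∃ ε : ℝ, (ε = 1 ∨ ε = -1) ∧ ∀ i, f (x i) = ε • x i) ↔ ∀ i, a i = a i0 := by
  constructor
  · rintro ⟨ε, -, hε⟩ i
    have hsign : ∀ j, zmodTwoSign (a j) = ε := fun j =>
      smul_left_injective ℝ (hx j) ((hf j).symm.trans (hε j))
    exact zmodTwoSign_injective ((hsign i).trans (hsign i0).symm)
  · intro h
    exact ⟨_, zmodTwoSign_eq_one_or_eq_neg_one (a i0), fun i => by rw [hf, h]⟩

theorem stmt_12_general {n K m : ℕ}
    {H : Type*} [AddCommGroup H] [Module ℂ H]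
    (S : (Fin n → ZMod 2) → Module.End ℂ H)
    (ψ : H) (hψ : ∀ V : Fin n → ZMod 2, S V ψ = ψ) (hψ0 : ψ ≠ 0)
    (C : Fin K → (Fin n → ZMod 2))
    (W : Fin K → Module.End ℂ H)
    (hW : ∀ (i : Fin K) (V : Fin n → ZMod 2),
      W i * S V = (if (∑ k, C i k * V k) = 0 then (1 : ℝ) else -1) • (S V * W i))
    (hWinv : ∀ i : Fin K, IsUnit (W i))
    (i0 : Fin K) (hC0 : C i0 = 0)
    (E : Fin m → Module.End ℂ H)
    (hEinv : ∀ e : Fin m, IsUnit (E e))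
    (u : Fin m → (Fin n → ZMod 2))
    (hE : ∀ (e : Fin m) (V : Fin n → ZMod 2),
      E e * S V = (if (∑ k, u e k * V k) = 0 then (1 : ℝ) else -1) • (S V * E e))
    (V V1 V2 : Fin n → ZMod 2)
    (p : Fin K → ZMod 2)
    (hp : ∀ i : Fin K,
      p i = if (∑ k, C i k * V1 k) = 0 ∧ (∑ k, C i k * V2 k) = 0 then 0 else 1)
    (F : Fin m → (Fin n → ZMod 2))
    (hF : ∀ e : Fin m,
      F e = (∑ k, u e k * V2 k) • V1 + (∑ k, u e k * V1 k) • V2)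
    (A : Module.End ℂ H)
    (hA : A = S V * ((1 / 2 : ℝ) • (-1 + S V1 + S V2 + S (V1 + V2)))) :
    (∀ e : Fin m, ∃ ε : ℝ, (ε = 1 ∨ ε = -1) ∧
        ∀ i : Fin K, A (E e (W i ψ)) = ε • (E e (W i ψ))) ↔
      (∀ (e : Fin m) (i : Fin K), (∑ k, C i k * (V + F e) k) = p i) := by
  have hφ : ∀ e i, IsJointEigenvector S (u e + C i) (E e (W i ψ)) := fun e i =>
    add_zero (C i) ▸ ((isJointEigenvector_zero_of_forall_apply_eq hψ).apply (hW i)).apply (hE e)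
  have hinj : ∀ {f : Module.End ℂ H}, IsUnit f → Function.Injective f := fun hf =>
    ((Module.End.isUnit_iff _).mp hf).injective
  have hφ0 : ∀ e i, E e (W i ψ) ≠ 0 := fun e i =>
    (map_ne_zero_iff _ (hinj (hEinv e))).mpr ((map_ne_zero_iff _ (hinj (hWinv i))).mpr hψ0)
  have hexp : ∀ e i, syndromeExponent V V1 V2 (u e + C i) =
      syndromeExponent V V1 V2 (u e + C i0) + (C i ⬝ᵥ (V + F e) + p i) := by
    intro e i
    rw [hC0, add_zero, hF, hp]
    exact syndromeExponent_add V V1 V2 (u e) (C i)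
  subst hA
  refine forall_congr' fun e => ?_
  rw [exists_sign_forall_apply_eq_smul_iff (hφ0 e) (fun i => (hφ e i).syndrome_apply V V1 V2) i0]
  refine forall_congr' fun i => ?_
  rw [hexp, add_eq_left, CharTwo.add_eq_zero]
  rfl

theorem stmt_12 {n K m : ℕ} (hn : 1 ≤ n) (hK : 1 ≤ K) (hm : 1 ≤ m)
    {H : Type*} [AddCommGroup H] [Module ℂ H]
    (S : (Fin n → ZMod 2) → Module.End ℂ H)
    (hS0 : S 0 = 1)
    (hSmul : ∀ U V : Fin n → ZMod 2, S (U + V) = S U * S V)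
    (ψ : H) (hψ : ∀ V : Fin n → ZMod 2, S V ψ = ψ) (hψ0 : ψ ≠ 0)
    (C : Fin K → (Fin n → ZMod 2))
    (W : Fin K → Module.End ℂ H)
    (hW : ∀ (i : Fin K) (V : Fin n → ZMod 2),
      W i * S V = (if (∑ k, C i k * V k) = 0 then (1 : ℝ) else -1) • (S V * W i))
    (hWinv : ∀ i : Fin K, IsUnit (W i))
    (i0 : Fin K) (hC0 : C i0 = 0) (hW0 : W i0 = 1)
    (E : Fin m → Module.End ℂ H)
    (hEinv : ∀ e : Fin m, IsUnit (E e))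
    (u : Fin m → (Fin n → ZMod 2))
    (hE : ∀ (e : Fin m) (V : Fin n → ZMod 2),
      E e * S V = (if (∑ k, u e k * V k) = 0 then (1 : ℝ) else -1) • (S V * E e))
    (V V1 V2 : Fin n → ZMod 2)
    (hV12 : V1 ≠ V2) (hV1 : V1 ≠ 0) (hV2 : V2 ≠ 0)
    (p : Fin K → ZMod 2)
    (hp : ∀ i : Fin K,
      p i = if (∑ k, C i k * V1 k) = 0 ∧ (∑ k, C i k * V2 k) = 0 then 0 else 1)
    (F : Fin m → (Fin n → ZMod 2))
    (hF : ∀ e : Fin m,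
      F e = (∑ k, u e k * V2 k) • V1 + (∑ k, u e k * V1 k) • V2)
    (A : Module.End ℂ H)
    (hA : A = S V * ((1 / 2 : ℝ) • (-1 + S V1 + S V2 + S (V1 + V2)))) :
    (∀ e : Fin m, ∃ ε : ℝ, (ε = 1 ∨ ε = -1) ∧
        ∀ i : Fin K, A (E e (W i ψ)) = ε • (E e (W i ψ))) ↔
      (∀ (e : Fin m) (i : Fin K), (∑ k, C i k * (V + F e) k) = p i) :=
  stmt_12_general S ψ hψ hψ0 C W hW hWinv i0 hC0 E hEinv u hE V V1 V2 p hp F hF A hA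
end
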